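/- arXiv:1908.00352 — 6 statements merged into one kernel-verified Lean document; each statement's English description precedes it below -/
import Mathlib

section
/- Let G = (V, E) be a finite acyclic digraph and let (V1, E1), (V2, E2) be a separation of G along a pair {u, v} of distinct vertices. If u dominates v in G and v has no incoming edge in E2 (that is, v is a source of H2), then for all vertices x, y ∈ V1, x dominates y in H1 = (V1, E1) if and only if x dominates y in G. -/
/-- `x` dominates `y` in the digraph with edge set `E`: there is a directed
path with at least one edge from `x` to `y`. -/
def Dominates {α : Type*} (E : Finset (α × α)) (x y : α) : Prop :=
  Relation.TransGen (fun a b => (a, b) ∈ E) x y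

/-- A separation of the finite digraph `(V, E)` along the pair `{u, v}` of
distinct vertices into `H1 = (V1, E1)` and `H2 = (V2, E2)`. -/
structure Separation {α : Type*} [DecidableEq α] (V : Finset α) (E : Finset (α × α))
    (u v : α) (V1 V2 : Finset α) (E1 E2 : Finset (α × α)) : Prop where
  ne : u ≠ v
  vUnion : V1 ∪ V2 = V
  vInter : V1 ∩ V2 = {u, v}
  eDisjoint : Disjoint E1 E2
  eUnion : E1 ∪ E2 = E
  mem1 : ∀ e ∈ E1, e.1 ∈ V1 ∧ e.2 ∈ V1
  mem2 : ∀ e ∈ E2, e.1 ∈ V2 ∧ e.2 ∈ V2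

/-
A path of `G` that leaves `V1` must do so along an `E2`-edge out of `u` or `v`. Since `v` has no
incoming `E2`-edge, such a path can only re-enter `V1` at `u`, so it closes a cycle through `u`
(directly, or via a path from `u` to `v`). Hence, by acyclicity, every path of `G` between vertices
of `V1` stays in `H1`.
-/

namespace Separation

variable {α : Type*} [DecidableEq α] {V V1 V2 : Finset α} {E E1 E2 : Finset (α × α)} {u v : α}

theorem mem_of_mem_left (hsep : Separation V E u v V1 V2 E1 E2) {a b : α} (h : (a, b) ∈ E1) :
    (a, b) ∈ E :=
  hsep.eUnion ▸ Finset.mem_union_left _ h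

theorem mem_of_mem_right (hsep : Separation V E u v V1 V2 E1 E2) {a b : α} (h : (a, b) ∈ E2) :
    (a, b) ∈ E :=
  hsep.eUnion ▸ Finset.mem_union_right _ h

theorem mem_left_or_mem_right (hsep : Separation V E u v V1 V2 E1 E2) {a b : α}
    (h : (a, b) ∈ E) : (a, b) ∈ E1 ∨ (a, b) ∈ E2 :=
  Finset.mem_union.mp (hsep.eUnion ▸ h)

theorem eq_or_eq_of_mem_of_mem (hsep : Separation V E u v V1 V2 E1 E2) {w : α}
    (h1 : w ∈ V1) (h2 : w ∈ V2) : w = u ∨ w = v := by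
  have hw : w ∈ V1 ∩ V2 := Finset.mem_inter.mpr ⟨h1, h2⟩
  simpa [hsep.vInter] using hw

theorem mem_right_of_not_mem_left (hsep : Separation V E u v V1 V2 E1 E2) {a b : α}
    (h : (a, b) ∈ E) (ha : a ∉ V1) : (a, b) ∈ E2 :=
  (hsep.mem_left_or_mem_right h).resolve_left fun h1 => ha (hsep.mem1 _ h1).1

/-- Outside `V1` only `E2`-edges are available, and none of them enters `v`. -/
theorem reflTransGen_u_of_reflTransGen_mem_left (hsep : Separation V E u v V1 V2 E1 E2)
    (hvsrc : ∀ e ∈ E2, e.2 ≠ v) {b y : α} (hb : b ∈ V2) (hbv : b ≠ v)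
    (hby : Relation.ReflTransGen (fun a b => (a, b) ∈ E) b y) (hy : y ∈ V1) :
    Relation.ReflTransGen (fun a b => (a, b) ∈ E) b u := by
  induction hby using Relation.ReflTransGen.head_induction_on with
  | refl => rw [(hsep.eq_or_eq_of_mem_of_mem hy hb).resolve_right hbv]
  | @head b c hbc _ ih =>
    by_cases hb1 : b ∈ V1
    · rw [(hsep.eq_or_eq_of_mem_of_mem hb1 hb).resolve_right hbv]
    · have hbc2 := hsep.mem_right_of_not_mem_left hbc hb1
      exact .head hbc (ih (hsep.mem2 _ hbc2).2 (hvsrc _ hbc2))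

theorem not_reflTransGen_of_mem_right (hsep : Separation V E u v V1 V2 E1 E2)
    (hacyc : ∀ x : α, ¬ Dominates E x x) (hdom : Dominates E u v)
    (hvsrc : ∀ e ∈ E2, e.2 ≠ v) {a b y : α} (hab : (a, b) ∈ E2) (ha : a ∈ V1) (hy : y ∈ V1) :
    ¬ Relation.ReflTransGen (fun a b => (a, b) ∈ E) b y := by
  intro hby
  have hbu := hsep.reflTransGen_u_of_reflTransGen_mem_left hvsrc (hsep.mem2 _ hab).2
    (hvsrc _ hab) hby hy
  have hau : Dominates E a u := .head' (hsep.mem_of_mem_right hab) hbu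
  rcases hsep.eq_or_eq_of_mem_of_mem ha (hsep.mem2 _ hab).1 with rfl | rfl
  · exact hacyc a hau
  · exact hacyc u (hdom.trans hau)

theorem dominates_left_of_dominates (hsep : Separation V E u v V1 V2 E1 E2)
    (hacyc : ∀ x : α, ¬ Dominates E x x) (hdom : Dominates E u v)
    (hvsrc : ∀ e ∈ E2, e.2 ≠ v) {x y : α} (hxy : Dominates E x y) (hx : x ∈ V1) (hy : y ∈ V1) :
    Dominates E1 x y := by
  induction hxy using Relation.TransGen.head_induction_on with
  | @single x hxy =>
    refine .single ((hsep.mem_left_or_mem_right hxy).resolve_right fun h2 => ?_)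
    exact hsep.not_reflTransGen_of_mem_right hacyc hdom hvsrc h2 hx hy .refl
  | @head x c hxc hcy ih =>
    have hxc1 := (hsep.mem_left_or_mem_right hxc).resolve_right fun h2 =>
      hsep.not_reflTransGen_of_mem_right hacyc hdom hvsrc h2 hx hy hcy.to_reflTransGen
    exact .head hxc1 (ih (hsep.mem1 _ hxc1).2)

end Separation

/-- If `G` is acyclic, `u` dominates `v` in `G` and `v` is a source of `H2`,
then dominance on `V1` is the same in `H1` as in `G`. -/
theorem stmt2 {α : Type*} [DecidableEq α] (V V1 V2 : Finset α)
    (E E1 E2 : Finset (α × α)) (u v : α)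
    (hsep : Separation V E u v V1 V2 E1 E2)
    (hacyc : ∀ x : α, ¬ Dominates E x x)
    (hdom : Dominates E u v)
    (hvsrc : ∀ e ∈ E2, e.2 ≠ v) :
    ∀ x ∈ V1, ∀ y ∈ V1, (Dominates E1 x y ↔ Dominates E x y) :=
  fun _ hx _ hy =>
    ⟨fun h => Relation.TransGen.mono (fun _ _ => hsep.mem_of_mem_left) _ _ h,
      fun h => hsep.dominates_left_of_dominates hacyc hdom hvsrc h hx hy⟩
end

section
/- Let G = (V, E) be a finite acyclic digraph and let (V1, E1), (V2, E2) be a separation of G along a pair {u, v} of distinct vertices. If u dominates v in H2 = (V2, E2), then for all vertices x, y ∈ V1, x dominates y in the digraph (V1, E1 ∪ {(u, v)}) if and only if x dominates y in G. -/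
/-!
A path of `G` between two vertices of `V1` leaves `H1` only through maximal runs of `H2`-edges,
and each such run starts and ends in `V1 ∩ V2 = {u, v}`. By acyclicity the only possible run is
one from `u` to `v`, which the marker edge replaces; conversely the marker edge is realised by
the `u`–`v` path of `H2`.
-/

namespace Relation

variable {α : Type*} {r₁ r₂ : α → α → Prop} {s : Set α}

theorem TransGen.sup_shortcut (hr₁ : ∀ a b, r₁ a b → a ∈ s ∧ b ∈ s) {a b : α}
    (ha : a ∈ s) (hb : b ∈ s) (h : TransGen (r₁ ⊔ r₂) a b) :
    TransGen (fun p q => r₁ p q ∨ (p ∈ s ∧ q ∈ s ∧ TransGen r₂ p q)) a b := by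
  set r := fun p q => r₁ p q ∨ (p ∈ s ∧ q ∈ s ∧ TransGen r₂ p q)
  have shortcut : ∀ {p q}, p ∈ s → q ∈ s → ReflTransGen r₂ p q → ReflTransGen r p q :=
    fun hp hq hpq => match hpq.cases_head with
      | .inl hpq => hpq ▸ .refl
      | .inr ⟨c, hpc, hcq⟩ => .single (.inr ⟨hp, hq, TransGen.head' hpc hcq⟩)
  -- `p` is the point of `s` at which the current run of `r₂`-edges began
  suffices ∀ z, TransGen (r₁ ⊔ r₂) z b → ∀ p ∈ s, ReflTransGen r₂ p z → TransGen r p b from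
    this a h a ha .refl
  intro z hz
  induction hz using TransGen.head_induction_on with
  | single hzb =>
    intro p hp hpz
    rcases hzb with hzb | hzb
    · exact TransGen.tail' (shortcut hp (hr₁ _ _ hzb).1 hpz) (.inl hzb)
    · exact .single (.inr ⟨hp, hb, TransGen.tail' hpz hzb⟩)
  | head hzw _ ih =>
    intro p hp hpz
    rcases hzw with hzw | hzw
    · obtain ⟨hz, hw⟩ := hr₁ _ _ hzw
      exact TransGen.trans_right (shortcut hp hz hpz) (.head (.inl hzw) (ih _ hw .refl))
    · exact ih p hp (hpz.tail hzw)

theorem TransGen.mem_of_forall_mem (hr : ∀ a b, r₁ a b → a ∈ s ∧ b ∈ s) {a b : α}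
    (h : TransGen r₁ a b) : a ∈ s ∧ b ∈ s := by
  obtain ⟨c, hac, -⟩ := TransGen.head'_iff.mp h
  obtain ⟨d, -, hdb⟩ := TransGen.tail'_iff.mp h
  exact ⟨(hr _ _ hac).1, (hr _ _ hdb).2⟩

end Relation

open Relation

section

variable {α : Type*}

theorem Dominates.mono {E E' : Finset (α × α)} (hE : E ⊆ E') {x y : α}
    (h : Dominates E x y) : Dominates E' x y :=
  TransGen.mono (fun _ _ hab => hE hab) _ _ h

namespace Separation

variable [DecidableEq α] {V V1 V2 : Finset α} {E E1 E2 : Finset (α × α)} {u v : α}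
  (hsep : Separation V E u v V1 V2 E1 E2)
include hsep

theorem subset_left : E1 ⊆ E := hsep.eUnion ▸ Finset.subset_union_left

theorem subset_right : E2 ⊆ E := hsep.eUnion ▸ Finset.subset_union_right

theorem eq_or_eq_of_mem_of_mem_s4 {z : α} (h₁ : z ∈ V1) (h₂ : z ∈ V2) : z = u ∨ z = v := by
  simpa [hsep.vInter] using Finset.mem_inter.mpr ⟨h₁, h₂⟩

theorem eq_marker_of_dominates₂ (hacyc : ∀ x : α, ¬ Dominates E x x)
    (hdom : Dominates E2 u v) {p q : α} (hp : p ∈ V1) (hq : q ∈ V1)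
    (hpq : Dominates E2 p q) : p = u ∧ q = v := by
  obtain ⟨hp₂, hq₂⟩ := TransGen.mem_of_forall_mem (s := (V2 : Set α))
    (fun a b hab => hsep.mem2 (a, b) hab) hpq
  have hcyc : ∀ {z}, ¬ Dominates E2 z z := fun h => hacyc _ (h.mono hsep.subset_right)
  rcases hsep.eq_or_eq_of_mem_of_mem_s4 hp hp₂ with rfl | rfl <;>
    rcases hsep.eq_or_eq_of_mem_of_mem_s4 hq hq₂ with rfl | rfl
  · exact absurd hpq hcyc
  · exact ⟨rfl, rfl⟩
  · exact absurd (hpq.trans hdom) hcyc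
  · exact absurd hpq hcyc

theorem dominates_of_dominates_insert_marker (hdom : Dominates E2 u v) {x y : α}
    (h : Dominates (insert (u, v) E1) x y) : Dominates E x y := by
  refine TransGen.closed (fun a b hab => ?_) _ _ h
  rcases Finset.mem_insert.mp hab with hab | hab
  · obtain ⟨rfl, rfl⟩ := Prod.mk.inj hab
    exact hdom.mono hsep.subset_right
  · exact .single (hsep.subset_left hab)

theorem dominates_insert_marker_of_dominates (hacyc : ∀ x : α, ¬ Dominates E x x)
    (hdom : Dominates E2 u v) {x y : α} (hx : x ∈ V1) (hy : y ∈ V1)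
    (h : Dominates E x y) : Dominates (insert (u, v) E1) x y := by
  have hsplit : TransGen ((fun a b => (a, b) ∈ E1) ⊔ fun a b => (a, b) ∈ E2) x y :=
    TransGen.mono (fun _ _ hab => Finset.mem_union.mp (hsep.eUnion ▸ hab)) _ _ h
  refine TransGen.mono (fun a b hab => ?_) _ _
    (TransGen.sup_shortcut (s := (V1 : Set α)) (fun a b hab => hsep.mem1 (a, b) hab) hx hy hsplit)
  rcases hab with hab | ⟨ha, hb, hab⟩
  · exact Finset.mem_insert_of_mem hab
  · obtain ⟨rfl, rfl⟩ := hsep.eq_marker_of_dominates₂ hacyc hdom ha hb hab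
    exact Finset.mem_insert_self _ _

end Separation

end

/-- If `G` is acyclic and `u` dominates `v` in `H2`, then dominance on `V1`
in `H1` augmented by the marker edge `(u, v)` is the same as in `G`. -/
theorem stmt4 {α : Type*} [DecidableEq α] (V V1 V2 : Finset α)
    (E E1 E2 : Finset (α × α)) (u v : α)
    (hsep : Separation V E u v V1 V2 E1 E2)
    (hacyc : ∀ x : α, ¬ Dominates E x x)
    (hdom : Dominates E2 u v) :
    ∀ x ∈ V1, ∀ y ∈ V1, (Dominates (insert (u, v) E1) x y ↔ Dominates E x y) :=
  fun _ hx _ hy => ⟨hsep.dominates_of_dominates_insert_marker hdom,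
    hsep.dominates_insert_marker_of_dominates hacyc hdom hx hy⟩
end

section
/- Let G = (V, E) be a finite acyclic digraph with exactly one source s, and let (V1, E1), (V2, E2) be a separation of G along a pair {u, v} of distinct vertices with s ∈ V1. If v has at least one incoming edge in E2, then u dominates v in H2 = (V2, E2), i.e., there is a directed path from u to v using only edges of E2. -/
/-- A vertex `w` is a source of the digraph `(V, E)`: it belongs to `V` and
has no incoming edge in `E`. -/
def IsSource {α : Type*} (V : Finset α) (E : Finset (α × α)) (w : α) : Prop :=
  w ∈ V ∧ ∀ e ∈ E, e.2 ≠ w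

/-! Follow incoming edges of `H2` backwards from `v`. Acyclicity and finiteness make this
terminate, and it can only stop at `u`: a vertex of `V2` other than `u`, `v` lies outside `V1`,
so it is not the source `s` and all its incoming edges lie in `E2`. -/

-- An edge `(a, b)` strictly increases the number of vertices dominating its endpoint.
theorem wellFounded_of_acyclic {α : Type*} (E : Finset (α × α))
    (hacyc : ∀ x, ¬ Dominates E x x) :
    WellFounded (fun a b => (a, b) ∈ E) := by
  classical
  let ancestors (x : α) := (E.image Prod.fst).filter (Dominates E · x)
  refine Subrelation.wf (fun {a b} hab => ?_) (measure fun x => (ancestors x).card).wf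
  refine Finset.card_lt_card ⟨fun y hy => ?_, fun hsub => hacyc a ?_⟩
  · simp only [ancestors, Finset.mem_filter] at hy ⊢
    exact ⟨hy.1, Relation.TransGen.tail hy.2 hab⟩
  · have ha : a ∈ ancestors b :=
      Finset.mem_filter.2 ⟨Finset.mem_image_of_mem Prod.fst hab, Relation.TransGen.single hab⟩
    exact (Finset.mem_filter.1 (hsub ha)).2

theorem WellFounded.transGen_of_forall_exists_pred {α : Type*} {r : α → α → Prop}
    (hwf : WellFounded r) {u : α} (hpred : ∀ w x, r w x → w ≠ u → ∃ y, r y w)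
    {w x : α} (hwx : r w x) : Relation.TransGen r u x := by
  induction x using hwf.induction generalizing w with
  | _ x ih =>
    by_cases hwu : w = u
    · exact hwu ▸ Relation.TransGen.single hwx
    · obtain ⟨y, hyw⟩ := hpred w x hwx hwu
      exact (ih w hwx hyw).tail hwx

theorem exists_in_edge_of_ne_unique_source {α : Type*} {V : Finset α} {E : Finset (α × α)}
    {s w : α} (huniq : ∀ w, IsSource V E w → w = s) (hwV : w ∈ V) (hws : w ≠ s) :
    ∃ e ∈ E, e.2 = w := by
  by_contra! h
  exact hws (huniq w ⟨hwV, h⟩)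

namespace Separation

variable {α : Type*} [DecidableEq α] {V V1 V2 : Finset α} {E E1 E2 : Finset (α × α)}
  {u v : α}

theorem E2_subset (hsep : Separation V E u v V1 V2 E1 E2) : E2 ⊆ E :=
  hsep.eUnion ▸ Finset.subset_union_right

theorem notMem_V1 (hsep : Separation V E u v V1 V2 E1 E2) {w : α} (hw : w ∈ V2)
    (hwu : w ≠ u) (hwv : w ≠ v) : w ∉ V1 := by
  intro hw1
  have : w ∈ ({u, v} : Finset α) := hsep.vInter ▸ Finset.mem_inter.2 ⟨hw1, hw⟩
  simp_all

theorem mem_E2_of_snd_notMem_V1 (hsep : Separation V E u v V1 V2 E1 E2) {e : α × α}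
    (he : e ∈ E) (he1 : e.2 ∉ V1) : e ∈ E2 := by
  rw [← hsep.eUnion, Finset.mem_union] at he
  exact he.resolve_left fun h => he1 (hsep.mem1 e h).2

theorem exists_pred_E2 (hsep : Separation V E u v V1 V2 E1 E2) {s : α}
    (huniq : ∀ w, IsSource V E w → w = s) (hs1 : s ∈ V1) {w : α} (hw : w ∈ V2)
    (hwu : w ≠ u) (hwv : w ≠ v) : ∃ y, (y, w) ∈ E2 := by
  have hw1 := hsep.notMem_V1 hw hwu hwv
  have hwV : w ∈ V := hsep.vUnion ▸ Finset.mem_union_right V1 hw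
  have hws : w ≠ s := fun h => hw1 (h ▸ hs1)
  obtain ⟨e, he, rfl⟩ := exists_in_edge_of_ne_unique_source huniq hwV hws
  exact ⟨e.1, hsep.mem_E2_of_snd_notMem_V1 he hw1⟩

end Separation

theorem stmt5_general {α : Type*} [DecidableEq α] (V V1 V2 : Finset α)
    (E E1 E2 : Finset (α × α)) (u v s : α)
    (hsep : Separation V E u v V1 V2 E1 E2)
    (hacyc : ∀ x : α, ¬ Dominates E x x)
    (huniq : ∀ w : α, IsSource V E w → w = s)
    (hs1 : s ∈ V1)
    (hin : ∃ e ∈ E2, e.2 = v) :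
    Dominates E2 u v := by
  have hwf : WellFounded (fun a b => (a, b) ∈ E2) :=
    wellFounded_of_acyclic E2 fun x hx =>
      hacyc x (Relation.TransGen.mono (fun _ _ h => hsep.E2_subset h) _ _ hx)
  obtain ⟨w, hwv⟩ : ∃ w, (w, v) ∈ E2 := by
    obtain ⟨e, he, rfl⟩ := hin
    exact ⟨e.1, he⟩
  refine hwf.transGen_of_forall_exists_pred (fun a b hab hau => ?_) hwv
  by_cases hav : a = v
  · exact ⟨w, hav ▸ hwv⟩
  · exact hsep.exists_pred_E2 huniq hs1 (hsep.mem2 _ hab).1 hau hav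

/-- In an acyclic single-source digraph whose source lies in `V1`, if `v` has
an incoming edge in `E2` then `u` dominates `v` in `H2`. -/
theorem stmt5 {α : Type*} [DecidableEq α] (V V1 V2 : Finset α)
    (E E1 E2 : Finset (α × α)) (u v s : α)
    (hsep : Separation V E u v V1 V2 E1 E2)
    (hacyc : ∀ x : α, ¬ Dominates E x x)
    (hsrc : IsSource V E s) (huniq : ∀ w : α, IsSource V E w → w = s)
    (hs1 : s ∈ V1)
    (hin : ∃ e ∈ E2, e.2 = v) :
    Dominates E2 u v :=
  stmt5_general V V1 V2 E E1 E2 u v s hsep hacyc huniq hs1 hin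
end

section
/- Let G = (V, E) be a finite digraph with exactly one source s, and let (V1, E1), (V2, E2) be a separation of G along a pair {u, v} of distinct vertices with s ∈ V1. Let w_s be a new vertex not in V. Then the digraph (V2 ∪ {w_s}, E2 ∪ {(w_s, u), (w_s, v)}) has exactly one source, namely w_s. -/
/-- Attaching the marker `M_s` (a new vertex `ws` with edges `(ws, u)` and
`(ws, v)`) to `H2` yields a digraph with exactly one source, namely `ws`. -/
theorem stmt10 {α : Type*} [DecidableEq α] (V V1 V2 : Finset α)
    (E E1 E2 : Finset (α × α)) (u v s ws : α)
    (hsep : Separation V E u v V1 V2 E1 E2)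
    (hsrc : IsSource V E s) (huniq : ∀ w : α, IsSource V E w → w = s)
    (hs1 : s ∈ V1)
    (hws : ws ∉ V) :
    IsSource (insert ws V2) (insert (ws, u) (insert (ws, v) E2)) ws ∧
    ∀ w : α, IsSource (insert ws V2) (insert (ws, u) (insert (ws, v) E2)) w → w = ws := by
  have huv : u ∈ V ∧ v ∈ V := by
    have hu : u ∈ V1 ∩ V2 := by rw [hsep.vInter]; simp
    have hv : v ∈ V1 ∩ V2 := by rw [hsep.vInter]; simp
    rw [← hsep.vUnion]
    exact ⟨Finset.mem_union_left _ (Finset.mem_inter.1 hu).1,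
      Finset.mem_union_left _ (Finset.mem_inter.1 hv).1⟩
  have hV2V : V2 ⊆ V := by rw [← hsep.vUnion]; exact Finset.subset_union_right
  constructor
  · refine ⟨Finset.mem_insert_self _ _, ?_⟩
    intro e he
    rcases Finset.mem_insert.1 he with rfl | he
    · exact fun h => hws (h ▸ huv.1)
    rcases Finset.mem_insert.1 he with rfl | he
    · exact fun h => hws (h ▸ huv.2)
    · intro h; exact hws (hV2V (h ▸ (hsep.mem2 e he).2))
  · rintro w ⟨hwmem, hwno⟩
    rcases Finset.mem_insert.1 hwmem with rfl | hw2
    · rfl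
    exfalso
    have hwu : w ≠ u := fun h => hwno (ws, u) (Finset.mem_insert_self _ _) (by simp [h])
    have hwv : w ≠ v := fun h =>
      hwno (ws, v) (Finset.mem_insert_of_mem (Finset.mem_insert_self _ _)) (by simp [h])
    have hw1 : w ∉ V1 := by
      intro h
      have : w ∈ V1 ∩ V2 := Finset.mem_inter.2 ⟨h, hw2⟩
      rw [hsep.vInter] at this
      rcases Finset.mem_insert.1 this with h | h
      · exact hwu h
      · exact hwv (Finset.mem_singleton.1 h)
    have : IsSource V E w := by
      refine ⟨hV2V hw2, ?_⟩
      intro e he h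
      rcases Finset.mem_union.1 (hsep.eUnion ▸ he) with h1 | h2
      · exact hw1 (h ▸ (hsep.mem1 e h1).2)
      · exact hwno e (Finset.mem_insert_of_mem (Finset.mem_insert_of_mem h2)) h
    exact hw1 (huniq w this ▸ hs1)
end

section
/- Let G = (V, E) be a finite digraph with exactly one source s, and let (V1, E1), (V2, E2) be a separation of G along a pair {u, v} of distinct vertices with s ∈ V1. Suppose neither u nor v has an incoming edge in E2 (that is, u and v are both sources of H2). Let w_t be a new vertex not in V. Then the digraph (V1 ∪ {w_t}, E1 ∪ {(u, w_t), (v, w_t)}) has exactly one source, namely s. -/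
/-- If `u` and `v` are both sources of `H2`, then attaching the marker `M_t`
(a new vertex `wt` with edges `(u, wt)` and `(v, wt)`) to `H1` yields a
digraph with exactly one source, namely `s`. -/
theorem stmt11 {α : Type*} [DecidableEq α] (V V1 V2 : Finset α)
    (E E1 E2 : Finset (α × α)) (u v s wt : α)
    (hsep : Separation V E u v V1 V2 E1 E2)
    (hsrc : IsSource V E s) (huniq : ∀ w : α, IsSource V E w → w = s)
    (hs1 : s ∈ V1)
    (hu : ∀ e ∈ E2, e.2 ≠ u) (hv : ∀ e ∈ E2, e.2 ≠ v)
    (hwt : wt ∉ V) :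
    IsSource (insert wt V1) (insert (u, wt) (insert (v, wt) E1)) s ∧
    ∀ w : α, IsSource (insert wt V1) (insert (u, wt) (insert (v, wt) E1)) w → w = s := by
  have hsV : s ∈ V := hsrc.1
  have hwts : wt ≠ s := fun h => hwt (h ▸ hsV)
  constructor
  · refine ⟨Finset.mem_insert_of_mem hs1, ?_⟩
    intro e he
    rcases Finset.mem_insert.mp he with rfl | he
    · exact hwts
    rcases Finset.mem_insert.mp he with rfl | he
    · exact hwts
    · exact hsrc.2 e (hsep.eUnion ▸ Finset.mem_union_left _ he)
  · intro w hw
    have hwne : w ≠ wt := by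
      rintro rfl
      exact hw.2 (u, w) (Finset.mem_insert_self _ _) rfl
    have hwV1 : w ∈ V1 := by
      rcases Finset.mem_insert.mp hw.1 with h | h
      · exact absurd h hwne
      · exact h
    apply huniq
    refine ⟨hsep.vUnion ▸ Finset.mem_union_left _ hwV1, ?_⟩
    intro e he
    rw [← hsep.eUnion] at he
    rcases Finset.mem_union.mp he with h | h
    · exact hw.2 e (Finset.mem_insert_of_mem (Finset.mem_insert_of_mem h))
    · intro heq
      have : w ∈ V1 ∩ V2 := Finset.mem_inter.mpr ⟨hwV1, heq ▸ (hsep.mem2 e h).2⟩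
      rw [hsep.vInter] at this
      rcases Finset.mem_insert.mp this with rfl | h2
      · exact hu e h heq
      · exact hv e h ((Finset.mem_singleton.mp h2) ▸ heq)
end

section
/- Let G = (V, E) be a finite digraph with exactly one source s, and let (V1, E1), (V2, E2) be a separation of G along a pair {u, v} of distinct vertices with s ∈ V1 and v ≠ s. Suppose u has no incoming edge in E2 (that is, u is a source of H2). Then the digraph (V1, E1 ∪ {(u, v)}) has exactly one source, namely s. -/
/-- If `u` is a source of `H2` and `v ≠ s`, then `H1` augmented by the marker
edge `(u, v)` has exactly one source, namely `s`. -/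
theorem stmt14 {α : Type*} [DecidableEq α] (V V1 V2 : Finset α)
    (E E1 E2 : Finset (α × α)) (u v s : α)
    (hsep : Separation V E u v V1 V2 E1 E2)
    (hsrc : IsSource V E s) (huniq : ∀ w : α, IsSource V E w → w = s)
    (hs1 : s ∈ V1) (hvs : v ≠ s)
    (hu : ∀ e ∈ E2, e.2 ≠ u) :
    IsSource V1 (insert (u, v) E1) s ∧
    ∀ w : α, IsSource V1 (insert (u, v) E1) w → w = s := by
  constructor
  · refine ⟨hs1, ?_⟩
    intro e he
    rcases Finset.mem_insert.mp he with h | h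
    · subst h; exact hvs
    · exact hsrc.2 e (hsep.eUnion ▸ Finset.mem_union_left _ h)
  · intro w hw
    apply huniq
    refine ⟨hsep.vUnion ▸ Finset.mem_union_left _ hw.1, ?_⟩
    intro e he hew
    rcases Finset.mem_union.mp (hsep.eUnion ▸ he) with h | h
    · exact hw.2 e (Finset.mem_insert_of_mem h) hew
    · have hwV2 : w ∈ V2 := hew ▸ (hsep.mem2 e h).2
      have : w ∈ ({u, v} : Finset α) := hsep.vInter ▸ Finset.mem_inter.mpr ⟨hw.1, hwV2⟩
      rcases Finset.mem_insert.mp this with rfl | hwv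
      · exact hu e h hew
      · have hwv := Finset.mem_singleton.mp hwv
        subst hwv
        exact hw.2 (u, w) (Finset.mem_insert_self _ _) rfl
end
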